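/- Let N ∈ ℕ and Δx > 0. Index vectors by i ∈ ℤ/Nℤ (periodic boundary conditions) and let D ∈ ℝ^{N×N} be the centered finite-difference matrix (Dφ)_i = (φ_{i+1} − φ_{i−1})/(2Δx). Define H̃ : ℝ^N × ℝ^N → ℝ by H̃(χ, φ) = (1/2) Σ_i [ (1 + χ_i) ((Dφ)_i)² + χ_i² ]. Then the canonical Hamiltonian system (χ', φ') = J_{2N} ∇H̃(χ, φ) (with (χ,φ) playing the role of (q,p)) is exactly the semi-discretized shallow water system: χ' = −D(Dφ) − D(χ ⊙ Dφ) and φ' = −(1/2) (Dφ) ⊙ (Dφ) − χ, where ⊙ denotes the componentwise product of vectors. -/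

import Mathlib

noncomputable section

/-- The centered finite-difference operator `(Dφ)ᵢ = (φ_{i+1} − φ_{i−1})/(2Δx)` with
periodic indexing `i ∈ ℤ/Nℤ`. -/
def centeredDiff (N : ℕ) (Δx : ℝ) (φ : ZMod N → ℝ) : ZMod N → ℝ :=
  fun i => (φ (i + 1) - φ (i - 1)) / (2 * Δx)

/-!
The Hamiltonian depends on `φ` only through `Dφ`, so its `φ`-gradient is
`Dᵀ((1 + χ) ⊙ Dφ) = -D((1 + χ) ⊙ Dφ)`, since periodic summation by parts makes `D`
skew-adjoint; its `χ`-gradient is `(1/2)(Dφ) ⊙ (Dφ) + χ`. Splitting `1 + χ` by linearity of `D`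
turns the canonical equations into the shallow water system.
-/

theorem hasDerivAt_piLp {𝕜 ι : Type*} {E : ι → Type*} [NontriviallyNormedField 𝕜]
    [Fintype ι] [∀ i, NormedAddCommGroup (E i)] [∀ i, NormedSpace 𝕜 (E i)]
    {p : ENNReal} [Fact (1 ≤ p)] {f : 𝕜 → PiLp p E} {f' : PiLp p E} {x : 𝕜} :
    HasDerivAt f f' x ↔ ∀ i, HasDerivAt (fun s => f s i) (f' i) x := by
  simp only [← hasDerivWithinAt_univ, hasDerivWithinAt_iff_hasFDerivWithinAt]
  rw [hasFDerivWithinAt_piLp]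
  rfl

theorem hasGradientAt_of_hasFDerivAt_of_apply {ι : Type*} [Fintype ι]
    {f : EuclideanSpace ℝ ι → ℝ} {L : EuclideanSpace ℝ ι →L[ℝ] ℝ} {g x : EuclideanSpace ℝ ι}
    (hf : HasFDerivAt f L x) (hL : ∀ v, L v = ∑ i, g i * v i) : HasGradientAt f g x := by
  rw [hasGradientAt_iff_hasFDerivAt]
  refine hf.congr_fderiv (ContinuousLinearMap.ext fun v => ?_)
  simp [hL, PiLp.inner_apply, mul_comm]

def centeredDiffCoordCLM (N : ℕ) [NeZero N] (Δx : ℝ) (i : ZMod N) :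
    EuclideanSpace ℝ (ZMod N) →L[ℝ] ℝ :=
  (2 * Δx)⁻¹ • (EuclideanSpace.proj (i + 1) - EuclideanSpace.proj (i - 1))

def shallowWaterHam (N : ℕ) [NeZero N] (Δx : ℝ) (χ φ : EuclideanSpace ℝ (ZMod N)) : ℝ :=
  (1 / 2) * ∑ i, ((1 + χ i) * (centeredDiff N Δx (fun j => φ j) i) ^ 2 + (χ i) ^ 2)

section CenteredDiff

variable {N : ℕ} [NeZero N] (Δx : ℝ)

theorem sum_centeredDiff_mul (u v : ZMod N → ℝ) :
    ∑ i, centeredDiff N Δx u i * v i = -∑ i, u i * centeredDiff N Δx v i := by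
  have shift_fwd : ∑ i, u (i + 1) * v i = ∑ i, u i * v (i - 1) := by
    simpa using (Equiv.sum_comp (Equiv.subRight (1 : ZMod N)) fun i => u (i + 1) * v i).symm
  have shift_bwd : ∑ i, u (i - 1) * v i = ∑ i, u i * v (i + 1) := by
    simpa using (Equiv.sum_comp (Equiv.addRight (1 : ZMod N)) fun i => u (i - 1) * v i).symm
  simp only [centeredDiff, div_mul_eq_mul_div, mul_div_assoc', sub_mul, mul_sub,
    ← Finset.sum_div, Finset.sum_sub_distrib, shift_fwd, shift_bwd]
  ring

theorem centeredDiffCoordCLM_apply (i : ZMod N) (p : EuclideanSpace ℝ (ZMod N)) :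
    centeredDiffCoordCLM N Δx i p = centeredDiff N Δx (fun j => p j) i := by
  simp [centeredDiffCoordCLM, centeredDiff, div_eq_inv_mul]

theorem hasFDerivAt_centeredDiff_apply (i : ZMod N) (p : EuclideanSpace ℝ (ZMod N)) :
    HasFDerivAt (fun q : EuclideanSpace ℝ (ZMod N) => centeredDiff N Δx (fun j => q j) i)
      (centeredDiffCoordCLM N Δx i) p := by
  convert (centeredDiffCoordCLM N Δx i).hasFDerivAt using 1
  exact funext fun q => (centeredDiffCoordCLM_apply Δx i q).symm

theorem hasGradientAt_shallowWaterHam_right (χ φ : EuclideanSpace ℝ (ZMod N)) :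
    HasGradientAt (shallowWaterHam N Δx χ)
      (WithLp.toLp 2 (-centeredDiff N Δx fun i => (1 + χ i) * centeredDiff N Δx (fun j => φ j) i))
      φ := by
  refine hasGradientAt_of_hasFDerivAt_of_apply ((HasFDerivAt.fun_sum fun i _ =>
    (((hasFDerivAt_centeredDiff_apply Δx i φ).pow 2).const_mul (1 + χ i)).add_const
      ((χ i) ^ 2)).const_mul (1 / 2)) fun v => ?_
  simp only [one_div, Nat.add_one_sub_one, pow_one, nsmul_eq_mul, Nat.cast_ofNat,
    smul_apply, sum_apply, centeredDiffCoordCLM_apply, smul_eq_mul, Pi.neg_apply, neg_mul,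
    Finset.sum_neg_distrib]
  rw [sum_centeredDiff_mul, neg_neg, Finset.mul_sum]
  exact Finset.sum_congr rfl fun i _ => by ring

theorem hasGradientAt_shallowWaterHam_left (χ φ : EuclideanSpace ℝ (ZMod N)) :
    HasGradientAt (fun q => shallowWaterHam N Δx q φ)
      (WithLp.toLp 2 fun i => (1 / 2) * centeredDiff N Δx (fun j => φ j) i ^ 2 + χ i) χ := by
  refine hasGradientAt_of_hasFDerivAt_of_apply ((HasFDerivAt.fun_sum fun i _ =>
    (((PiLp.hasFDerivAt_apply 2 χ i).const_add 1).mul_const _).add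
      ((PiLp.hasFDerivAt_apply 2 χ i).pow 2)).const_mul (1 / 2)) fun v => ?_
  simp only [one_div, Nat.add_one_sub_one, pow_one, nsmul_eq_mul, Nat.cast_ofNat,
    smul_apply, sum_apply, add_apply, PiLp.proj_apply, smul_eq_mul]
  rw [Finset.mul_sum]
  exact Finset.sum_congr rfl fun i _ => by ring

end CenteredDiff

theorem semidiscrete_shallow_water_hamiltonian_general
    (N : ℕ) [NeZero N] (Δx : ℝ)
    (Ham : EuclideanSpace ℝ (ZMod N) → EuclideanSpace ℝ (ZMod N) → ℝ)
    (hHam : ∀ χ φ, Ham χ φ =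
      (1 / 2) * ∑ i : ZMod N,
        ((1 + χ i) * (centeredDiff N Δx (fun j => φ j) i) ^ 2 + (χ i) ^ 2))
    (χ φ : ℝ → EuclideanSpace ℝ (ZMod N)) (t : ℝ) :
    (HasDerivAt χ (gradient (fun p => Ham (χ t) p) (φ t)) t ∧
      HasDerivAt φ (-gradient (fun q => Ham q (φ t)) (χ t)) t)
    ↔
    (∀ i : ZMod N,
      HasDerivAt (fun s => χ s i)
        (-(centeredDiff N Δx (centeredDiff N Δx (fun j => φ t j)) i)
          - centeredDiff N Δx (fun j => χ t j * centeredDiff N Δx (fun k => φ t k) j) i) t ∧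
      HasDerivAt (fun s => φ s i)
        (-(1 / 2) * (centeredDiff N Δx (fun j => φ t j) i) ^ 2 - χ t i) t) := by
  obtain rfl : Ham = shallowWaterHam N Δx := funext₂ hHam
  rw [(hasGradientAt_shallowWaterHam_right Δx (χ t) (φ t)).gradient,
    (hasGradientAt_shallowWaterHam_left Δx (χ t) (φ t)).gradient,
    hasDerivAt_piLp, hasDerivAt_piLp, forall_and]
  refine and_congr (forall_congr' fun i => ?_) (forall_congr' fun i => ?_)
  · refine iff_of_eq (congrArg (HasDerivAt _ · t) ?_)
    simp only [Pi.neg_apply, centeredDiff]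
    ring
  · refine iff_of_eq (congrArg (HasDerivAt _ · t) ?_)
    simp only [PiLp.neg_apply]
    ring

/-- The semi-discretized shallow water system is the canonical Hamiltonian system for
`H̃(χ, φ) = (1/2) Σᵢ [(1 + χᵢ)((Dφ)ᵢ)² + χᵢ²]` with `(χ, φ)` playing the role of
`(q, p)`: a pair of trajectories solves `(χ', φ') = J_{2N} ∇H̃(χ, φ)` (i.e.
`χ' = ∇_φ H̃`, `φ' = −∇_χ H̃`) if and only if
`χ' = −D(Dφ) − D(χ ⊙ Dφ)` and `φ' = −(1/2)(Dφ) ⊙ (Dφ) − χ` componentwise. -/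
theorem semidiscrete_shallow_water_hamiltonian
    (N : ℕ) [NeZero N] (Δx : ℝ) (hΔx : 0 < Δx)
    (Ham : EuclideanSpace ℝ (ZMod N) → EuclideanSpace ℝ (ZMod N) → ℝ)
    (hHam : ∀ χ φ, Ham χ φ =
      (1 / 2) * ∑ i : ZMod N,
        ((1 + χ i) * (centeredDiff N Δx (fun j => φ j) i) ^ 2 + (χ i) ^ 2))
    (χ φ : ℝ → EuclideanSpace ℝ (ZMod N)) (t : ℝ) :
    (HasDerivAt χ (gradient (fun p => Ham (χ t) p) (φ t)) t ∧
      HasDerivAt φ (-gradient (fun q => Ham q (φ t)) (χ t)) t)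
    ↔
    (∀ i : ZMod N,
      HasDerivAt (fun s => χ s i)
        (-(centeredDiff N Δx (centeredDiff N Δx (fun j => φ t j)) i)
          - centeredDiff N Δx (fun j => χ t j * centeredDiff N Δx (fun k => φ t k) j) i) t ∧
      HasDerivAt (fun s => φ s i)
        (-(1 / 2) * (centeredDiff N Δx (fun j => φ t j) i) ^ 2 - χ t i) t) :=
  semidiscrete_shallow_water_hamiltonian_general N Δx Ham hHam χ φ t
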